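/- Each HGML_c classifier is captured by an HC-MPNN over valid relational hypergraphs: for every HGML_c formula φ(x) over a vocabulary of relation types R with arities, node colors C, and constant symbols b ∈ b̃, there exist L ≥ 0, an HC-MPNN with L layers whose initialization INIT(v, q) depends only on the color of v and on which (if any) constant of b̃ the node v interprets, and a designated coordinate p of the final feature vectors, such that for every valid relational hypergraph G = (V, E, R, c, (v_b)_{b∈b̃}) and every node v ∈ V, the p-th entry of h_v^(L) equals 1 if G ⊨ φ(v) and equals 0 otherwise. -/

import Mathlib

/-- A relational hypergraph over node set `V`, relation types `R` with arities `ar`.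
A hyperedge (fact) `r(u₁,…,u_k)` is a pair of a relation type `r` and the tuple of
its nodes, of length `k = ar r`. -/
structure RelHG (V R : Type) (ar : R → ℕ) where
  edges : Finset (Σ r : R, Fin (ar r) → V)

variable {V R D : Type} {ar : R → ℕ}

/-- `E(v)`: the set of edge–position pairs `(e, i)` with `e(i) = v`. -/
def RelHG.incid [DecidableEq V] (H : RelHG V R ar) (v : V) :
    Finset (Σ e : Σ r : R, Fin (ar r) → V, Fin (ar e.1)) :=
  (H.edges.sigma fun e => (Finset.univ : Finset (Fin (ar e.1)))).filter
    fun p => p.1.2 p.2 = v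

/-- Colors used by the canonical (`τ = id`) hypergraph relational 1-WL test after `ℓ`
rounds, starting from colors in `D`. -/
def WLC (D R : Type) : ℕ → Type :=
  fun ℓ => Nat.rec D (fun _ ih => ih × Multiset (Set (ih × ℕ) × R)) ℓ

/-- The hypergraph relational 1-WL test `hrwl₁`, with the canonical injective `τ`
(pairing), starting from the node coloring `c`. -/
def RelHG.hrwl [DecidableEq V] (H : RelHG V R ar) (c : V → D) :
    (ℓ : ℕ) → V → WLC D R ℓ
  | 0 => c
  | ℓ + 1 => fun v =>
      ⟨RelHG.hrwl H c ℓ v,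
        (H.incid v).val.map fun ei =>
          ({p : WLC D R ℓ × ℕ |
              ∃ j : Fin (ar ei.1.1), j ≠ ei.2 ∧
                p = (RelHG.hrwl H c ℓ (ei.1.2 j), (j : ℕ))},
            ei.1.1)⟩

/-- A hypergraph relational MPNN (HR-MPNN): layer dimensions `d`, message spaces `M`,
aggregation spaces `A`, and arbitrary relation-specific message, aggregation and
update functions for every layer. -/
structure HRMPNN (R : Type) where
  d : ℕ → ℕ
  M : ℕ → Type
  A : ℕ → Type
  msg : (ℓ : ℕ) → R → Set ((Fin (d ℓ) → ℝ) × ℕ) → M ℓ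
  agg : (ℓ : ℕ) → (Fin (d ℓ) → ℝ) → Multiset (M ℓ) → A ℓ
  up : (ℓ : ℕ) → (Fin (d ℓ) → ℝ) → A ℓ → Fin (d (ℓ + 1)) → ℝ

/-- The feature maps `h⁽ℓ⁾` computed by an HR-MPNN on a relational hypergraph `H`
from the initial feature map `x`. -/
def HRMPNN.h [DecidableEq V] (net : HRMPNN R) (H : RelHG V R ar)
    (x : V → Fin (net.d 0) → ℝ) : (ℓ : ℕ) → V → Fin (net.d ℓ) → ℝ
  | 0 => x
  | ℓ + 1 => fun v =>
      net.up ℓ (HRMPNN.h net H x ℓ v)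
        (net.agg ℓ (HRMPNN.h net H x ℓ v)
          ((H.incid v).val.map fun ei =>
            net.msg ℓ ei.1.1
              {p : (Fin (net.d ℓ) → ℝ) × ℕ |
                ∃ j : Fin (ar ei.1.1), j ≠ ei.2 ∧
                  p = (HRMPNN.h net H x ℓ (ei.1.2 j), (j : ℕ))}))

mutual
/-- Formulas of hypergraph graded modal logic with constants (HGML_c), over relation
types `R` with arities `ar`, node colors `C`, and constant symbols `B`.
`const b` is the atomic formula `x = b`; `count r i N hN Ψ` is
`∃^{≥N} ỹ (r(y₁,…,y_{i-1},x,y_{i+1},…,y_{ar r}) ∧ Ψ(ỹ))` with `N ≥ 1`. -/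
inductive HGMLc (R C B : Type) (ar : R → ℕ) : Type where
  | color : C → HGMLc R C B ar
  | const : B → HGMLc R C B ar
  | fnot : HGMLc R C B ar → HGMLc R C B ar
  | fand : HGMLc R C B ar → HGMLc R C B ar → HGMLc R C B ar
  | count : (r : R) → (i : Fin (ar r)) → (N : ℕ) → 1 ≤ N →
      BCombc R C B ar (ar r) i → HGMLc R C B ar

/-- Boolean combinations of HGML_c formulas whose free variables range over the
positions `j ≠ i` of a relation of arity `k` (the tuple `ỹ`). -/
inductive BCombc (R C B : Type) (ar : R → ℕ) : (k : ℕ) → Fin k → Type where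
  | atom : {k : ℕ} → {i : Fin k} → (j : Fin k) → j ≠ i → HGMLc R C B ar →
      BCombc R C B ar k i
  | bnot : {k : ℕ} → {i : Fin k} → BCombc R C B ar k i → BCombc R C B ar k i
  | band : {k : ℕ} → {i : Fin k} → BCombc R C B ar k i → BCombc R C B ar k i →
      BCombc R C B ar k i
end

variable {C B : Type}

mutual
/-- Satisfaction `G ⊨ φ(v)` of an HGML_c formula at a node of a relational hypergraph
`H` with node coloring `c` and interpretation `ι` of the constants.  In the counting
case we count full tuples `w : Fin (ar r) → V` with `w i = v`. -/
def HGMLc.sat (H : RelHG V R ar) (c : V → C) (ι : B → V) : HGMLc R C B ar → V → Prop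
  | .color a, v => c v = a
  | .const b, v => v = ι b
  | .fnot φ, v => ¬ HGMLc.sat H c ι φ v
  | .fand φ ψ, v => HGMLc.sat H c ι φ v ∧ HGMLc.sat H c ι ψ v
  | .count r i N _ Ψ, v =>
      ∃ s : Finset (Fin (ar r) → V),
        N ≤ s.card ∧ ∀ w ∈ s, w i = v ∧
          (⟨r, w⟩ : Σ r' : R, Fin (ar r') → V) ∈ H.edges ∧ BCombc.sat H c ι Ψ w

/-- Satisfaction of a Boolean combination under an assignment `w` of the variables. -/
def BCombc.sat (H : RelHG V R ar) (c : V → C) (ι : B → V) :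
    {k : ℕ} → {i : Fin k} → BCombc R C B ar k i → (Fin k → V) → Prop
  | _, _, .atom j _ φ, w => HGMLc.sat H c ι φ (w j)
  | _, _, .bnot Ψ, w => ¬ BCombc.sat H c ι Ψ w
  | _, _, .band Ψ₁ Ψ₂, w => BCombc.sat H c ι Ψ₁ w ∧ BCombc.sat H c ι Ψ₂ w
end
/-
A network with one coordinate per subformula of `φ` can keep, after `ℓ` layers, the `0`/`1` truth
value of every subformula of counting depth at most `ℓ` at every node. The initialization reads off
colors and constants; a layer evaluates Boolean connectives from the node's own features, and
`∃^{≥N} ỹ (r(…, x, …) ∧ Ψ(ỹ))` by counting the incidences `(e, i)` with `ρ e = r` whose message,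
the set of features of the other nodes of `e` tagged with their positions, satisfies `Ψ`. Since
messages and aggregation lose nothing, `φ` can be read off after `depth φ` layers.
-/

namespace HGMLc

mutual
def subs : HGMLc R C B ar → List (HGMLc R C B ar)
  | .color a => [.color a]
  | .const b => [.const b]
  | .fnot ψ => .fnot ψ :: ψ.subs
  | .fand ψ χ => .fand ψ χ :: (ψ.subs ++ χ.subs)
  | .count r i N hN Ψ => .count r i N hN Ψ :: Ψ.subs

def _root_.BCombc.subs {k : ℕ} {i : Fin k} : BCombc R C B ar k i → List (HGMLc R C B ar)
  | .atom _ _ χ => χ.subs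
  | .bnot Ψ => Ψ.subs
  | .band Ψ₁ Ψ₂ => Ψ₁.subs ++ Ψ₂.subs
end

mutual
def depth : HGMLc R C B ar → ℕ
  | .color _ => 0
  | .const _ => 0
  | .fnot ψ => ψ.depth
  | .fand ψ χ => max ψ.depth χ.depth
  | .count _ _ _ _ Ψ => Ψ.depth + 1

def _root_.BCombc.depth {k : ℕ} {i : Fin k} : BCombc R C B ar k i → ℕ
  | .atom _ _ χ => χ.depth
  | .bnot Ψ => Ψ.depth
  | .band Ψ₁ Ψ₂ => max Ψ₁.depth Ψ₂.depth
end

theorem mem_subs_self (φ : HGMLc R C B ar) : φ ∈ φ.subs := by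
  cases φ <;> simp [subs]

def satLocal (a : C) (ob : Option B) : HGMLc R C B ar → Prop
  | .color a' => a = a'
  | .const b => ob = some b
  | .fnot ψ => ¬ ψ.satLocal a ob
  | .fand ψ χ => ψ.satLocal a ob ∧ χ.satLocal a ob
  | .count _ _ _ _ _ => False

theorem satLocal_iff_sat {H : RelHG V R ar} {c : V → C} {ι : B → V} {o : V → Option B}
    (ho : ∀ (v : V) (b : B), o v = some b ↔ ι b = v) :
    ∀ ψ : HGMLc R C B ar, ψ.depth = 0 → ∀ v : V, (ψ.satLocal (c v) (o v) ↔ ψ.sat H c ι v)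
  | .color a, _, v => by simp [satLocal, sat]
  | .const b, _, v => (ho v b).trans eq_comm
  | .fnot ψ, h, v => not_congr (satLocal_iff_sat ho ψ h v)
  | .fand ψ χ, h, v => by
      rw [depth, Nat.max_eq_zero_iff] at h
      exact and_congr (satLocal_iff_sat ho ψ h.1 v) (satLocal_iff_sat ho χ h.2 v)
  | .count _ _ _ _ _, h, _ => by simp [depth] at h

open Classical in
noncomputable def coord (φ ψ : HGMLc R C B ar) : Fin φ.subs.length :=
  if h : ψ ∈ φ.subs then ⟨φ.subs.idxOf ψ, List.idxOf_lt_length_iff.mpr h⟩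
  else ⟨0, List.length_pos_of_mem φ.mem_subs_self⟩

theorem get_coord {φ ψ : HGMLc R C B ar} (h : ψ ∈ φ.subs) : φ.subs.get (φ.coord ψ) = ψ := by
  classical
  rw [coord, dif_pos h]
  exact List.idxOf_get _

end HGMLc

section Messages

variable {X : Type}

/-- `{(g u, j) | (u, j) ∈ N_i(w)}`, the set passed to `MSG` in `HRMPNN.h`. -/
def edgeMsg (g : V → X) {k : ℕ} (w : Fin k → V) (i : Fin k) : Set (X × ℕ) :=
  {p | ∃ j : Fin k, j ≠ i ∧ p = (g (w j), (j : ℕ))}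

theorem mem_edgeMsg_iff {g : V → X} {k : ℕ} {w : Fin k → V} {i j : Fin k} {y : X} :
    (y, (j : ℕ)) ∈ edgeMsg g w i ↔ j ≠ i ∧ y = g (w j) := by
  simp only [edgeMsg, Set.mem_ofPred_eq, Prod.mk.injEq, Fin.val_inj]
  constructor
  · rintro ⟨j, hj, rfl, rfl⟩
    exact ⟨hj, rfl⟩
  · rintro ⟨hj, rfl⟩
    exact ⟨j, hj, rfl, rfl⟩

theorem forall_not_mem_edgeMsg_iff {g : V → X} {k : ℕ} {w : Fin k → V} {i i' : Fin k} :
    (∀ y, (y, (i : ℕ)) ∉ edgeMsg g w i') ↔ i = i' := by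
  simp only [mem_edgeMsg_iff, not_and]
  exact ⟨fun h => by_contra fun hne => h _ hne rfl, fun h _ hne => absurd h hne⟩

def RelHG.inbox [DecidableEq V] (H : RelHG V R ar) (g : V → X) (v : V) :
    Multiset (Set (X × ℕ) × R) :=
  (H.incid v).val.map fun ei => (edgeMsg g ei.1.2 ei.2, ei.1.1)

theorem RelHG.mem_incid_iff [DecidableEq V] {H : RelHG V R ar} {v : V}
    {ei : Σ e : Σ r : R, Fin (ar r) → V, Fin (ar e.1)} :
    ei ∈ H.incid v ↔ ei.1 ∈ H.edges ∧ ei.1.2 ei.2 = v := by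
  simp [RelHG.incid]

open Classical in
theorem RelHG.card_filter_inbox [Fintype V] [DecidableEq V] (H : RelHG V R ar) (g : V → X)
    (v : V) (r : R) (i : Fin (ar r)) (Q : Set (X × ℕ) → Prop) :
    Multiset.card ((H.inbox g v).filter fun m => m.2 = r ∧ (∀ y, (y, (i : ℕ)) ∉ m.1) ∧ Q m.1) =
      (Finset.univ.filter fun w : Fin (ar r) → V =>
        w i = v ∧ (⟨r, w⟩ : Σ r, Fin (ar r) → V) ∈ H.edges ∧ Q (edgeMsg g w i)).card := by
  rw [RelHG.inbox, Multiset.filter_map, Multiset.card_map, ← Finset.filter_val,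
    ← Finset.card_def]
  symm
  refine Finset.card_bij (fun w _ => ⟨⟨r, w⟩, i⟩) ?_ ?_ ?_
  · intro w hw
    simp only [Finset.mem_filter, Finset.mem_univ, true_and] at hw
    simp only [Finset.mem_filter, RelHG.mem_incid_iff, Function.comp_apply]
    exact ⟨⟨hw.2.1, hw.1⟩, trivial, forall_not_mem_edgeMsg_iff.mpr rfl, hw.2.2⟩
  · intro w₁ _ w₂ _ h
    simpa using h
  · rintro ⟨⟨r', w⟩, i'⟩ h
    simp only [Finset.mem_filter, RelHG.mem_incid_iff, Function.comp_apply] at h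
    obtain ⟨⟨hw, hv⟩, rfl, hi, hQ⟩ := h
    obtain rfl := forall_not_mem_edgeMsg_iff.mp hi
    exact ⟨w, by simpa using ⟨hv, hw, hQ⟩, rfl⟩

end Messages

open Classical in
theorem HGMLc.sat_count_iff [Fintype V] {H : RelHG V R ar} {c : V → C} {ι : B → V} {r : R}
    {i : Fin (ar r)} {N : ℕ} {hN : 1 ≤ N} {Ψ : BCombc R C B ar (ar r) i} {v : V} :
    (HGMLc.count r i N hN Ψ).sat H c ι v ↔
      N ≤ (Finset.univ.filter fun w : Fin (ar r) → V =>
        w i = v ∧ (⟨r, w⟩ : Σ r, Fin (ar r) → V) ∈ H.edges ∧ Ψ.sat H c ι w).card := by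
  rw [HGMLc.sat]
  constructor
  · rintro ⟨s, hN, hs⟩
    exact hN.trans (Finset.card_le_card fun w hw => by simpa using hs w hw)
  · exact fun hN => ⟨_, hN, fun w hw => by simpa using hw⟩

open Classical in
mutual
noncomputable def HGMLc.evalStep (φ : HGMLc R C B ar) (x : Fin φ.subs.length → ℝ)
    (m : Multiset (Set ((Fin φ.subs.length → ℝ) × ℕ) × R)) : HGMLc R C B ar → Prop
  | .color a => x (φ.coord (.color a)) = 1
  | .const b => x (φ.coord (.const b)) = 1
  | .fnot ψ => ¬ φ.evalStep x m ψ
  | .fand ψ χ => φ.evalStep x m ψ ∧ φ.evalStep x m χ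
  | .count r i N _ Ψ =>
      -- the receiver's position `i` is recognised as the one position missing from a message
      N ≤ Multiset.card (m.filter fun s => s.2 = r ∧ (∀ y, (y, (i : ℕ)) ∉ s.1) ∧ Ψ.evalMsg φ s.1)

noncomputable def BCombc.evalMsg (φ : HGMLc R C B ar) {k : ℕ} {i : Fin k} :
    BCombc R C B ar k i → Set ((Fin φ.subs.length → ℝ) × ℕ) → Prop
  | .atom j _ χ, S => ∃ y, (y, (j : ℕ)) ∈ S ∧ y (φ.coord χ) = 1
  | .bnot Ψ, S => ¬ Ψ.evalMsg φ S
  | .band Ψ₁ Ψ₂, S => Ψ₁.evalMsg φ S ∧ Ψ₂.evalMsg φ S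
end

namespace HGMLc

open Classical in
/-- `ψ.subs ⊆ φ.subs` expresses that `ψ` is a subformula of `φ`, in a form that is inherited by
the subformulas of `ψ`. -/
def Encodes (φ : HGMLc R C B ar) (H : RelHG V R ar) (c : V → C) (ι : B → V) (ℓ : ℕ)
    (g : V → Fin φ.subs.length → ℝ) : Prop :=
  ∀ v ψ, ψ.subs ⊆ φ.subs → ψ.depth ≤ ℓ → g v (φ.coord ψ) = if ψ.sat H c ι v then 1 else 0

variable {φ : HGMLc R C B ar} {H : RelHG V R ar} {c : V → C} {ι : B → V} {ℓ : ℕ}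
  {g : V → Fin φ.subs.length → ℝ}

theorem Encodes.coord_eq_one_iff (hg : φ.Encodes H c ι ℓ g) {v : V} {ψ : HGMLc R C B ar}
    (hsub : ψ.subs ⊆ φ.subs) (hd : ψ.depth ≤ ℓ) : g v (φ.coord ψ) = 1 ↔ ψ.sat H c ι v := by
  rw [hg v ψ hsub hd]
  split_ifs with h <;> simp [h]

mutual
theorem evalStep_inbox_iff [DecidableEq V] [Fintype V] (hg : φ.Encodes H c ι ℓ g) (v : V) :
    ∀ ψ : HGMLc R C B ar, ψ.subs ⊆ φ.subs → ψ.depth ≤ ℓ + 1 →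
      (φ.evalStep (g v) (H.inbox g v) ψ ↔ ψ.sat H c ι v)
  | .color a, hsub, _ => hg.coord_eq_one_iff hsub (Nat.zero_le ℓ)
  | .const b, hsub, _ => hg.coord_eq_one_iff hsub (Nat.zero_le ℓ)
  | .fnot ψ, hsub, hd => by
      rw [subs, List.cons_subset] at hsub
      exact not_congr (evalStep_inbox_iff hg v ψ hsub.2 hd)
  | .fand ψ χ, hsub, hd => by
      rw [subs, List.cons_subset, List.append_subset] at hsub
      rw [depth, max_le_iff] at hd
      exact and_congr (evalStep_inbox_iff hg v ψ hsub.2.1 hd.1)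
        (evalStep_inbox_iff hg v χ hsub.2.2 hd.2)
  | .count r i N hN Ψ, hsub, hd => by
      rw [subs, List.cons_subset] at hsub
      rw [depth, Nat.add_le_add_iff_right] at hd
      rw [evalStep, sat_count_iff, RelHG.card_filter_inbox]
      congr! 3 with w
      rw [BCombc.evalMsg_edgeMsg_iff hg Ψ hsub.2 hd w]

theorem _root_.BCombc.evalMsg_edgeMsg_iff (hg : φ.Encodes H c ι ℓ g) {k : ℕ} {i : Fin k} :
    ∀ Ψ : BCombc R C B ar k i, Ψ.subs ⊆ φ.subs → Ψ.depth ≤ ℓ → ∀ w : Fin k → V,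
      (Ψ.evalMsg φ (edgeMsg g w i) ↔ Ψ.sat H c ι w)
  | .atom j hj χ, hsub, hd, w => by
      simp only [BCombc.evalMsg, BCombc.sat, mem_edgeMsg_iff, ne_eq, hj, not_false_eq_true,
        true_and, exists_eq_left]
      exact hg.coord_eq_one_iff hsub hd
  | .bnot Ψ, hsub, hd, w => not_congr (BCombc.evalMsg_edgeMsg_iff hg Ψ hsub hd w)
  | .band Ψ₁ Ψ₂, hsub, hd, w => by
      rw [BCombc.subs, List.append_subset] at hsub
      rw [BCombc.depth, max_le_iff] at hd
      exact and_congr (BCombc.evalMsg_edgeMsg_iff hg Ψ₁ hsub.1 hd.1 w)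
        (BCombc.evalMsg_edgeMsg_iff hg Ψ₂ hsub.2 hd.2 w)
end

open Classical in
noncomputable def init (φ : HGMLc R C B ar) (a : C) (ob : Option B) :
    Fin φ.subs.length → ℝ :=
  fun p => if (φ.subs.get p).satLocal a ob then 1 else 0

theorem encodes_init {o : V → Option B} (ho : ∀ (v : V) (b : B), o v = some b ↔ ι b = v) :
    φ.Encodes H c ι 0 fun v => φ.init (c v) (o v) := by
  classical
  intro v ψ hsub hd
  dsimp only [init]
  rw [get_coord (hsub ψ.mem_subs_self)]
  exact if_congr (satLocal_iff_sat ho ψ (Nat.le_zero.mp hd) v) rfl rfl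

open Classical in
noncomputable def net (φ : HGMLc R C B ar) : HRMPNN R where
  d _ := φ.subs.length
  M _ := Set ((Fin φ.subs.length → ℝ) × ℕ) × R
  A _ := Multiset (Set ((Fin φ.subs.length → ℝ) × ℕ) × R)
  msg _ r S := (S, r)
  agg _ _ m := m
  up _ x m p := if φ.evalStep x m (φ.subs.get p) then 1 else 0

theorem Encodes.net_h_succ [DecidableEq V] [Fintype V] {x : V → Fin (φ.net.d 0) → ℝ}
    (hg : φ.Encodes H c ι ℓ (φ.net.h H x ℓ)) : φ.Encodes H c ι (ℓ + 1) (φ.net.h H x (ℓ + 1)) := by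
  classical
  intro v ψ hsub hd
  change (if φ.evalStep _ (H.inbox _ v) (φ.subs.get (φ.coord ψ)) then 1 else 0) = _
  rw [get_coord (hsub ψ.mem_subs_self)]
  exact if_congr (evalStep_inbox_iff hg v ψ hsub hd) rfl rfl

theorem encodes_net_h [DecidableEq V] [Fintype V] {o : V → Option B}
    (ho : ∀ (v : V) (b : B), o v = some b ↔ ι b = v) :
    ∀ ℓ, φ.Encodes H c ι ℓ (φ.net.h H (fun v => φ.init (c v) (o v)) ℓ)
  | 0 => encodes_init ho
  | ℓ + 1 => (encodes_net_h ho ℓ).net_h_succ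

end HGMLc

/-- Each HGML_c classifier is captured by an HC-MPNN over valid
relational hypergraphs: for every HGML_c formula `φ(x)` there are `L ≥ 0`, an HC-MPNN
with `L` layers whose initialization depends only on the color of a node and on which
(if any) constant the node interprets (its message, aggregation and update functions
do not depend on the query, so it is given by HR-MPNN layers together with the
initialization `f`), and a coordinate `p` of the final feature vectors, such that on
every valid relational hypergraph (i.e. one whose constant interpretation `ι` is
injective) the `p`-th entry of `h_v⁽ᴸ⁾` is `1` if `G ⊨ φ(v)` and `0` otherwise.
Here `o : V → Option B` records which (if any) constant each node interprets. -/
theorem hgmlc_captured_by_HCMPNN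
    {R C B : Type} [Fintype R] [DecidableEq R] [Fintype C] [DecidableEq C]
    {ar : R → ℕ} (har : ∀ r : R, 1 ≤ ar r) (φ : HGMLc R C B ar) :
    ∃ (L : ℕ) (net : HRMPNN R) (f : C → Option B → Fin (net.d 0) → ℝ)
      (p : Fin (net.d L)),
      ∀ (V : Type) [Fintype V] [DecidableEq V]
        (H : RelHG V R ar) (c : V → C) (ι : B → V),
        Function.Injective ι →
        ∀ o : V → Option B, (∀ (v : V) (b : B), o v = some b ↔ ι b = v) →
        ∀ v : V,
          (HGMLc.sat H c ι φ v → net.h H (fun u => f (c u) (o u)) L v p = 1) ∧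
          (¬ HGMLc.sat H c ι φ v → net.h H (fun u => f (c u) (o u)) L v p = 0) := by
  refine ⟨φ.depth, φ.net, φ.init, φ.coord φ, fun V _ _ H c ι _ o ho v => ?_⟩
  have hφ := HGMLc.encodes_net_h (H := H) (c := c) ho φ.depth v φ (List.Subset.refl _) le_rfl
  constructor <;> intro h <;> simp [hφ, h]
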